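/- arXiv:1804.00426 — 2 statements merged into one kernel-verified Lean document; each statement's English description precedes it below -/
import Mathlib

section
/- Let (H_Q, F^•, W_•) be a mixed Hodge structure on a finite-dimensional vector space. If for every half-integer p one has dim gr_F^p H_C = dim gr^W_{2p} H_Q (where gr_F^p = 0 for non-integer p), then the mixed Hodge structure is of Hodge–Tate type. -/
open Module

/-- Dimension of the `p`-th `F`-graded piece of the `m`-th `W`-graded piece. -/
noncomputable def grFgrW {H : Type*} [AddCommGroup H] [Module ℂ H]
    (F W : ℤ → Submodule ℂ H) (p m : ℤ) : ℕ :=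
  Module.finrank ℂ ↥((F p ⊓ W m) ⊔ W (m - 1)) -
    Module.finrank ℂ ↥((F (p + 1) ⊓ W m) ⊔ W (m - 1))

namespace HodgeTateAux

/-- Integer-valued dimension of `(F p ⊓ W m) ⊔ W (m-1)`. -/
noncomputable def nD {H : Type*} [AddCommGroup H] [Module ℂ H]
    (F W : ℤ → Submodule ℂ H) (p m : ℤ) : ℤ :=
  (Module.finrank ℂ ↥((F p ⊓ W m) ⊔ W (m - 1)) : ℤ)

/-- Integer-valued dimension of `F p ⊓ W m`. -/
noncomputable def nE {H : Type*} [AddCommGroup H] [Module ℂ H]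
    (F W : ℤ → Submodule ℂ H) (p m : ℤ) : ℤ :=
  (Module.finrank ℂ ↥(F p ⊓ W m) : ℤ)

/-- Integer-valued dimension of the bigraded piece. -/
noncomputable def nA {H : Type*} [AddCommGroup H] [Module ℂ H]
    (F W : ℤ → Submodule ℂ H) (p m : ℤ) : ℤ :=
  nD F W p m - nD F W (p + 1) m

section Basic

variable {H : Type*} [AddCommGroup H] [Module ℂ H] [FiniteDimensional ℂ H]
  (F W : ℤ → Submodule ℂ H)

lemma nA_nonneg (hF : Antitone F) (p m : ℤ) : 0 ≤ nA F W p m := by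
  have h1 : F (p + 1) ≤ F p := hF (by omega)
  have h2 : (F (p + 1) ⊓ W m) ⊔ W (m - 1) ≤ (F p ⊓ W m) ⊔ W (m - 1) :=
    sup_le_sup_right (inf_le_inf_right _ h1) _
  have := Submodule.finrank_mono h2
  simp only [nA, nD]
  omega

lemma grFgrW_cast (hF : Antitone F) (p m : ℤ) :
    (grFgrW F W p m : ℤ) = nA F W p m := by
  have := nA_nonneg F W hF p m
  simp only [nA, nD, grFgrW] at *
  omega

/-- If `F p = F (p+1)` then the bigraded piece vanishes. -/
lemma nA_eq_zero_of_F (p m : ℤ) (h : F p = F (p + 1)) : nA F W p m = 0 := by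
  simp only [nA, nD]
  rw [h]
  ring

/-- If `W m = W (m-1)` then the bigraded piece vanishes. -/
lemma nA_eq_zero_of_W (p m : ℤ) (h : W m = W (m - 1)) : nA F W p m = 0 := by
  have h1 : ∀ r : ℤ, (F r ⊓ W m) ⊔ W (m - 1) = W (m - 1) := by
    intro r
    apply sup_eq_right.mpr
    rw [← h]
    exact inf_le_right
  simp only [nA, nD]
  rw [h1 p, h1 (p + 1)]
  ring

/-- Dimension count: `nD` in terms of `nE`. -/
lemma nD_eq (hW : Monotone W) (r m : ℤ) :
    nD F W r m = nE F W r m - nE F W r (m - 1) + (Module.finrank ℂ ↥(W (m - 1)) : ℤ) := by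
  have h1 : (F r ⊓ W m) ⊓ W (m - 1) = F r ⊓ W (m - 1) := by
    rw [inf_assoc, inf_eq_right.mpr (hW (by omega : (m - 1 : ℤ) ≤ m))]
  have h2 := Submodule.finrank_sup_add_finrank_inf_eq (F r ⊓ W m) (W (m - 1))
  rw [h1] at h2
  simp only [nD, nE]
  omega

lemma nA_eq (hW : Monotone W) (p m : ℤ) :
    nA F W p m = (nE F W p m - nE F W p (m - 1)) -
      (nE F W (p + 1) m - nE F W (p + 1) (m - 1)) := by
  rw [nA, nD_eq F W hW p m, nD_eq F W hW (p + 1) m]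
  ring

end Basic

/-- Telescoping sum over `Finset.Icc` in `ℤ`. -/
lemma sum_telescope (G : ℤ → ℤ) (a : ℤ) : ∀ b, a - 1 ≤ b →
    ∑ x ∈ Finset.Icc a b, (G x - G (x - 1)) = G b - G (a - 1) := by
  refine Int.le_induction ?_ ?_
  · rw [Finset.Icc_eq_empty (by omega)]
    simp
  · intro b hb ih
    have hins : Finset.Icc a (b + 1) = insert (b + 1) (Finset.Icc a b) := by
      ext x
      simp only [Finset.mem_Icc, Finset.mem_insert]
      omega
    rw [hins, Finset.sum_insert (by simp only [Finset.mem_Icc]; omega)]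
    rw [ih]
    have hb1 : b + 1 - 1 = b := by ring
    rw [hb1]
    ring

end HodgeTateAux

open HodgeTateAux

/-- If a mixed Hodge structure satisfies
`dim gr_F^p H = dim gr^W_{2p} H` for all half-integers `p`
(`gr_F^p = 0` for non-integral `p`, so the odd weight graded pieces vanish),
then it is of Hodge–Tate type. -/
theorem stmt1 {H : Type*} [AddCommGroup H] [Module ℂ H] [FiniteDimensional ℂ H]
    (F W : ℤ → Submodule ℂ H)
    (hF : Antitone F) (hW : Monotone W)
    (hFtop : ∃ a : ℤ, ∀ p ≤ a, F p = ⊤) (hFbot : ∃ b : ℤ, ∀ p, b ≤ p → F p = ⊥)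
    (hWbot : ∃ a : ℤ, ∀ m ≤ a, W m = ⊥) (hWtop : ∃ b : ℤ, ∀ m, b ≤ m → W m = ⊤)
    -- Hodge symmetry on each weight-graded piece (coming from the mixed Hodge
    -- structure that `(H, F, W)` underlies):
    (hMHS : ∀ k p : ℤ, grFgrW F W p k = grFgrW F W (k - p) k)
    -- equality of dimensions at integral `p` ...
    (hdim : ∀ p : ℤ,
      Module.finrank ℂ ↥(F p) - Module.finrank ℂ ↥(F (p + 1)) =
        Module.finrank ℂ ↥(W (2 * p)) - Module.finrank ℂ ↥(W (2 * p - 1)))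
    -- ... and at non-integral half-integers `p`, where `gr_F^p = 0`:
    (hodd : ∀ k : ℤ,
      Module.finrank ℂ ↥(W (2 * k + 1)) - Module.finrank ℂ ↥(W (2 * k)) = 0) :
    -- Hodge–Tate: `W` has only even jumps and `gr_F^p gr^W_{2q} = 0` for `p ≠ q`.
    (∀ k : ℤ, W (2 * k + 1) = W (2 * k)) ∧
      (∀ p q : ℤ, p ≠ q → grFgrW F W p (2 * q) = 0) := by
  classical
  obtain ⟨aF, haF⟩ := hFtop
  obtain ⟨bF, hbF⟩ := hFbot
  obtain ⟨ma, hma⟩ := hWbot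
  obtain ⟨mb, hmb⟩ := hWtop
  -- Part 1: odd jumps of W vanish
  have hWodd : ∀ k : ℤ, W (2 * k + 1) = W (2 * k) := by
    intro k
    have hle : W (2 * k) ≤ W (2 * k + 1) := hW (by omega)
    have h1 := Submodule.finrank_mono (R := ℂ) hle
    have h2 := hodd k
    exact (Submodule.eq_of_le_of_finrank_le hle (by omega)).symm
  refine ⟨hWodd, ?_⟩
  -- abbreviation: integer jump of W at weight 2q
  set w : ℤ → ℤ := fun q =>
    (Module.finrank ℂ ↥(W (2 * q)) : ℤ) - (Module.finrank ℂ ↥(W (2 * q - 1)) : ℤ) with hw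
  -- collapse of nE at odd indices
  have hEodd : ∀ r q : ℤ, nE F W r (2 * q - 1) = nE F W r (2 * q - 2) := by
    intro r q
    have : W (2 * q - 1) = W (2 * q - 2) := by
      have := hWodd (q - 1)
      have e1 : 2 * (q - 1) + 1 = 2 * q - 1 := by ring
      have e2 : 2 * (q - 1) = 2 * q - 2 := by ring
      rw [e1, e2] at this
      exact this
    simp only [nE]
    rw [this]
  -- bounds
  set P0 : ℤ := aF - |aF| with hP0
  set P1 : ℤ := bF + |bF| with hP1
  set Q0 : ℤ := ma - |ma| with hQ0
  set Q1 : ℤ := mb + |mb| with hQ1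
  have habsaF := abs_nonneg aF; have hlaF := le_abs_self aF; have hnaF := neg_abs_le aF
  have habsbF := abs_nonneg bF; have hlbF := le_abs_self bF; have hnbF := neg_abs_le bF
  have habsma := abs_nonneg ma; have hlma := le_abs_self ma; have hnma := neg_abs_le ma
  have habsmb := abs_nonneg mb; have hlmb := le_abs_self mb; have hnmb := neg_abs_le mb
  have hP0aF : P0 ≤ aF := by omega
  have hP0le0 : P0 ≤ 0 := by omega
  have h0P1 : 0 ≤ P1 := by omega
  have hbFP1 : bF ≤ P1 + 1 := by omega
  have hQ0ma : 2 * Q0 - 2 ≤ ma := by omega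
  have hQ0le0 : Q0 ≤ 0 := by omega
  have h0Q1 : 0 ≤ Q1 := by omega
  have hmbQ1 : mb ≤ 2 * Q1 := by omega
  set R0 : ℤ := min P0 (min Q0 (2 * Q0 - P1)) with hR0
  set R1 : ℤ := max P1 (max Q1 (2 * Q1 - P0)) with hR1
  have hR0P0 : R0 ≤ P0 := min_le_left _ _
  have hR0Q0 : R0 ≤ Q0 := le_trans (min_le_right _ _) (min_le_left _ _)
  have hR0r : R0 ≤ 2 * Q0 - P1 := le_trans (min_le_right _ _) (min_le_right _ _)
  have hP1R1 : P1 ≤ R1 := le_max_left _ _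
  have hQ1R1 : Q1 ≤ R1 := le_trans (le_max_left _ _) (le_max_right _ _)
  have hrR1 : 2 * Q1 - P0 ≤ R1 := le_trans (le_max_right _ _) (le_max_right _ _)
  set S : Finset ℤ := Finset.Icc R0 R1 with hS
  -- support in p
  have hsuppF : ∀ p m : ℤ, p < P0 ∨ P1 < p → nA F W p m = 0 := by
    intro p m hp
    apply nA_eq_zero_of_F
    rcases hp with hp | hp
    · rw [haF p (by omega), haF (p + 1) (by omega)]
    · rw [hbF p (by omega), hbF (p + 1) (by omega)]
  -- support in q
  have hsuppW : ∀ p q : ℤ, q < Q0 ∨ Q1 < q → nA F W p (2 * q) = 0 := by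
    intro p q hq
    apply nA_eq_zero_of_W
    rcases hq with hq | hq
    · rw [hma (2 * q) (by omega), hma (2 * q - 1) (by omega)]
    · rw [hmb (2 * q) (by omega), hmb (2 * q - 1) (by omega)]
  -- column sums
  have hcol : ∀ q : ℤ, ∑ p ∈ S, nA F W p (2 * q) = w q := by
    intro q
    have h1 : ∑ p ∈ Finset.Icc P0 P1, nA F W p (2 * q) =
        nD F W P0 (2 * q) - nD F W (P1 + 1) (2 * q) := by
      have := sum_telescope (fun p => -nD F W (p + 1) (2 * q)) P0 P1 (by omega)
      have hc : ∀ p ∈ Finset.Icc P0 P1, nA F W p (2 * q) =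
          (fun p => -nD F W (p + 1) (2 * q)) p -
            (fun p => -nD F W (p + 1) (2 * q)) (p - 1) := by
        intro p _
        simp only [nA]
        have : p - 1 + 1 = p := by ring
        rw [this]
        ring
      rw [Finset.sum_congr rfl hc, this]
      have hpp : P0 - 1 + 1 = P0 := by ring
      rw [hpp]
      ring
    have hD0 : nD F W P0 (2 * q) = (Module.finrank ℂ ↥(W (2 * q)) : ℤ) := by
      have hT : F P0 = ⊤ := haF P0 hP0aF
      have : (F P0 ⊓ W (2 * q)) ⊔ W (2 * q - 1) = W (2 * q) := by
        rw [hT, top_inf_eq]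
        exact sup_eq_left.mpr (hW (by omega))
      simp only [nD]
      rw [this]
    have hD1 : nD F W (P1 + 1) (2 * q) = (Module.finrank ℂ ↥(W (2 * q - 1)) : ℤ) := by
      have hB : F (P1 + 1) = ⊥ := hbF (P1 + 1) (by omega)
      have : (F (P1 + 1) ⊓ W (2 * q)) ⊔ W (2 * q - 1) = W (2 * q - 1) := by
        rw [hB, bot_inf_eq, bot_sup_eq]
      simp only [nD]
      rw [this]
    have h2 : ∑ p ∈ Finset.Icc P0 P1, nA F W p (2 * q) = ∑ p ∈ S, nA F W p (2 * q) := by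
      apply Finset.sum_subset (Finset.Icc_subset_Icc hR0P0 hP1R1)
      intro x hx hnx
      simp only [Finset.mem_Icc] at hx hnx
      exact hsuppF x (2 * q) (by omega)
    rw [← h2, h1, hD0, hD1]
  -- row sums
  have hrow : ∀ p : ℤ, ∑ q ∈ S, nA F W p (2 * q) = w p := by
    intro p
    have h1 : ∑ q ∈ Finset.Icc Q0 Q1, nA F W p (2 * q) =
        (nE F W p (2 * Q1) - nE F W (p + 1) (2 * Q1)) -
          (nE F W p (2 * Q0 - 2) - nE F W (p + 1) (2 * Q0 - 2)) := by
      have := sum_telescope (fun q => nE F W p (2 * q) - nE F W (p + 1) (2 * q))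
        Q0 Q1 (by omega)
      have hc : ∀ q ∈ Finset.Icc Q0 Q1, nA F W p (2 * q) =
          (fun q => nE F W p (2 * q) - nE F W (p + 1) (2 * q)) q -
            (fun q => nE F W p (2 * q) - nE F W (p + 1) (2 * q)) (q - 1) := by
        intro q _
        have e2 : 2 * (q - 1) = 2 * q - 2 := by ring
        simp only [e2]
        rw [nA_eq F W hW p (2 * q), hEodd p q, hEodd (p + 1) q]
        ring
      rw [Finset.sum_congr rfl hc, this]
      have e2 : 2 * (Q0 - 1) = 2 * Q0 - 2 := by ring
      rw [e2]
    have hTop : ∀ r : ℤ, nE F W r (2 * Q1) = (Module.finrank ℂ ↥(F r) : ℤ) := by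
      intro r
      have : W (2 * Q1) = ⊤ := hmb _ hmbQ1
      simp only [nE]
      rw [this, inf_top_eq]
    have hBot : ∀ r : ℤ, nE F W r (2 * Q0 - 2) = 0 := by
      intro r
      have : W (2 * Q0 - 2) = ⊥ := hma _ (by omega)
      simp only [nE]
      rw [this, inf_bot_eq]
      simp
    have h2 : ∑ q ∈ Finset.Icc Q0 Q1, nA F W p (2 * q) = ∑ q ∈ S, nA F W p (2 * q) := by
      apply Finset.sum_subset (Finset.Icc_subset_Icc hR0Q0 hQ1R1)
      intro x hx hnx
      simp only [Finset.mem_Icc] at hx hnx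
      exact hsuppW p x (by omega)
    have hle1 : Module.finrank ℂ ↥(F (p + 1)) ≤ Module.finrank ℂ ↥(F p) :=
      Submodule.finrank_mono (hF (by omega))
    have hle2 : Module.finrank ℂ ↥(W (2 * p - 1)) ≤ Module.finrank ℂ ↥(W (2 * p)) :=
      Submodule.finrank_mono (hW (by omega))
    have hd := hdim p
    rw [← h2, h1, hTop p, hTop (p + 1), hBot p, hBot (p + 1)]
    simp only [hw]
    omega
  -- symmetry in integer form
  have hsymm : ∀ p q : ℤ, nA F W p (2 * q) = nA F W (2 * q - p) (2 * q) := by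
    intro p q
    have := hMHS (2 * q) p
    have h1 := grFgrW_cast F W hF p (2 * q)
    have h2 := grFgrW_cast F W hF (2 * q - p) (2 * q)
    rw [← h1, ← h2, this]
  -- first moments of columns
  have hmom : ∀ q : ℤ, ∑ p ∈ S, (p - q) * nA F W p (2 * q) = 0 := by
    intro q
    by_cases hq : Q0 ≤ q ∧ q ≤ Q1
    · -- restrict any reasonable interval sum to the p-support
      have hrestr : ∀ (g : ℤ → ℤ) (a b : ℤ), a ≤ P0 → P1 ≤ b →
          ∑ p ∈ Finset.Icc a b, g p * nA F W p (2 * q) =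
            ∑ p ∈ Finset.Icc P0 P1, g p * nA F W p (2 * q) := by
        intro g a b ha hb
        refine (Finset.sum_subset (Finset.Icc_subset_Icc ha hb) ?_).symm
        intro x hx hnx
        simp only [Finset.mem_Icc] at hx hnx
        rw [hsuppF x (2 * q) (by omega), mul_zero]
      have hkey : ∑ p ∈ S, p * nA F W p (2 * q) =
          ∑ p ∈ S, (2 * q - p) * nA F W p (2 * q) := by
        calc ∑ p ∈ S, p * nA F W p (2 * q)
            = ∑ p ∈ S, p * nA F W (2 * q - p) (2 * q) := by
              refine Finset.sum_congr rfl fun p _ => ?_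
              rw [← hsymm p q]
          _ = ∑ p ∈ Finset.Icc (2 * q - R1) (2 * q - R0),
                (2 * q - p) * nA F W p (2 * q) := by
              refine Finset.sum_nbij' (fun p => 2 * q - p) (fun p => 2 * q - p)
                ?_ ?_ ?_ ?_ ?_
              · intro a haS
                simp only [hS, Finset.mem_Icc] at haS ⊢
                omega
              · intro a haT
                simp only [hS, Finset.mem_Icc] at haT ⊢
                omega
              · intro a _; ring
              · intro a _; ring
              · intro a _
                have hqa : 2 * q - (2 * q - a) = a := by ring
                rw [hqa]
          _ = ∑ p ∈ Finset.Icc P0 P1, (2 * q - p) * nA F W p (2 * q) := by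
              apply hrestr (fun p => 2 * q - p) _ _ (by omega) (by omega)
          _ = ∑ p ∈ S, (2 * q - p) * nA F W p (2 * q) := by
              rw [hS]
              exact (hrestr (fun p => 2 * q - p) R0 R1 hR0P0 hP1R1).symm
      have hexp : ∑ p ∈ S, (p - q) * nA F W p (2 * q) =
          ∑ p ∈ S, p * nA F W p (2 * q) - q * ∑ p ∈ S, nA F W p (2 * q) := by
        rw [Finset.mul_sum, ← Finset.sum_sub_distrib]
        refine Finset.sum_congr rfl fun p _ => ?_
        ring
      have hexp2 : ∑ p ∈ S, (2 * q - p) * nA F W p (2 * q) =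
          2 * q * ∑ p ∈ S, nA F W p (2 * q) - ∑ p ∈ S, p * nA F W p (2 * q) := by
        rw [Finset.mul_sum, ← Finset.sum_sub_distrib]
        refine Finset.sum_congr rfl fun p _ => ?_
        ring
      rw [hexp2] at hkey
      have h2t : 2 * (∑ p ∈ S, p * nA F W p (2 * q) -
          q * ∑ p ∈ S, nA F W p (2 * q)) = 0 := by
        linear_combination hkey
      rw [hexp]
      linarith [h2t]
    · refine Finset.sum_eq_zero fun p _ => ?_
      rw [hsuppW p q (by omega), mul_zero]
  -- the double sum of (p - q)^2 * nA vanishes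
  have hdouble : ∑ q ∈ S, ∑ p ∈ S, (p - q) ^ 2 * nA F W p (2 * q) = 0 := by
    have hpercol : ∀ q : ℤ, ∑ p ∈ S, (p - q) ^ 2 * nA F W p (2 * q) =
        (∑ p ∈ S, p ^ 2 * nA F W p (2 * q)) - q ^ 2 * w q := by
      intro q
      have h1 := hmom q
      have h2 := hcol q
      have hexp : ∀ p : ℤ, (p - q) ^ 2 * nA F W p (2 * q) =
          p ^ 2 * nA F W p (2 * q) - 2 * q * ((p - q) * nA F W p (2 * q)) -
            q ^ 2 * nA F W p (2 * q) := by
        intro p; ring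
      rw [Finset.sum_congr rfl (fun p _ => hexp p), Finset.sum_sub_distrib,
        Finset.sum_sub_distrib, ← Finset.mul_sum, ← Finset.mul_sum, h1, h2]
      ring
    rw [Finset.sum_congr rfl (fun q _ => hpercol q), Finset.sum_sub_distrib]
    have h3 : ∑ q ∈ S, ∑ p ∈ S, p ^ 2 * nA F W p (2 * q) = ∑ p ∈ S, p ^ 2 * w p := by
      rw [Finset.sum_comm]
      refine Finset.sum_congr rfl fun p _ => ?_
      rw [← Finset.mul_sum, hrow p]
    rw [h3]
    ring
  -- nonnegativity of each term
  have hterm : ∀ q ∈ S, ∀ p ∈ S, p ≠ q → nA F W p (2 * q) = 0 := by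
    have hnn : ∀ q ∈ S, 0 ≤ ∑ p ∈ S, (p - q) ^ 2 * nA F W p (2 * q) := by
      intro q _
      refine Finset.sum_nonneg fun p _ =>
        mul_nonneg (sq_nonneg _) (nA_nonneg F W hF p (2 * q))
    have h0 := (Finset.sum_eq_zero_iff_of_nonneg hnn).mp hdouble
    intro q hq p hp hpq
    have h1 := (Finset.sum_eq_zero_iff_of_nonneg
      (fun p _ => mul_nonneg (sq_nonneg _) (nA_nonneg F W hF p (2 * q)))).mp
      (h0 q hq) p hp
    have h2 : (p - q) ^ 2 ≠ 0 := pow_ne_zero _ (sub_ne_zero.mpr hpq)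
    exact (mul_eq_zero.mp h1).resolve_left h2
  -- conclude
  intro p q hpq
  have hA0 : nA F W p (2 * q) = 0 := by
    by_cases hqS : Q0 ≤ q ∧ q ≤ Q1
    · by_cases hpS : P0 ≤ p ∧ p ≤ P1
      · refine hterm q ?_ p ?_ hpq
        · simp only [hS, Finset.mem_Icc]; omega
        · simp only [hS, Finset.mem_Icc]; omega
      · exact hsuppF p (2 * q) (by omega)
    · exact hsuppW p q (by omega)
  have := grFgrW_cast F W hF p (2 * q)
  omega
end

section
/- Let H be a finite-dimensional complex vector space with a decreasing filtration F^• with F^{p} = H for p ≤ 0 and F^{p} = 0 for p > ν, and an increasing filtration W_• with only even jumps. Suppose that for all j ≤ ℓ we have gr_F^p gr^W_{2j} H = 0 whenever p ≠ j, and that dim gr_F^j H = dim gr^W_{2j} H for all j ≤ ℓ. Then gr^W_{2i}(gr_F^j H) = 0 for all j ≤ ℓ and i ≠ j; in particular gr_F^p gr^W_{2(ℓ+1)} H = 0 for all p ≤ ℓ. -/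
open Module

/-- `dim gr^W_m gr_F^p H` (the `W`-graded piece of the `F`-graded piece). -/
noncomputable def grWgrF {H : Type*} [AddCommGroup H] [Module ℂ H]
    (F W : ℤ → Submodule ℂ H) (p m : ℤ) : ℕ :=
  Module.finrank ℂ ↥((W m ⊓ F p) ⊔ F (p + 1)) -
    Module.finrank ℂ ↥((W (m - 1) ⊓ F p) ⊔ F (p + 1))

section Zassenhaus

variable {H : Type*} [AddCommGroup H] [Module ℂ H] [FiniteDimensional ℂ H]

private lemma zassen_sum (A A' B B' : Submodule ℂ H) (hA : A' ≤ A) (hB : B' ≤ B) :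
    Module.finrank ℂ ↥((A ⊓ B) ⊔ B') + Module.finrank ℂ ↥((B' ⊓ A) ⊔ A') =
    Module.finrank ℂ ↥((B ⊓ A) ⊔ A') + Module.finrank ℂ ↥((A' ⊓ B) ⊔ B') := by
  have h1 := Submodule.finrank_sup_add_finrank_inf_eq (A ⊓ B) B'
  have h2 := Submodule.finrank_sup_add_finrank_inf_eq (B' ⊓ A) A'
  have h3 := Submodule.finrank_sup_add_finrank_inf_eq (B ⊓ A) A'
  have h4 := Submodule.finrank_sup_add_finrank_inf_eq (A' ⊓ B) B'
  have e1 : A ⊓ B ⊓ B' = A ⊓ B' := by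
    rw [inf_assoc, inf_eq_right.mpr hB]
  have e2 : B' ⊓ A ⊓ A' = B' ⊓ A' := by
    rw [inf_assoc, inf_eq_right.mpr hA]
  have e3 : B ⊓ A ⊓ A' = B ⊓ A' := by
    rw [inf_assoc, inf_eq_right.mpr hA]
  have e4 : A' ⊓ B ⊓ B' = A' ⊓ B' := by
    rw [inf_assoc, inf_eq_right.mpr hB]
  rw [e1] at h1; rw [e2] at h2; rw [e3] at h3; rw [e4] at h4
  have c1 : B' ⊓ A = A ⊓ B' := inf_comm _ _
  have c2 : B ⊓ A = A ⊓ B := inf_comm _ _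
  have c3 : A' ⊓ B = B ⊓ A' := inf_comm _ _
  have c4 : A' ⊓ B' = B' ⊓ A' := inf_comm _ _
  rw [c1] at h2; rw [c2] at h3; rw [c3, c4] at h4
  rw [c1, c2, c3]
  omega

private lemma zassen (A A' B B' : Submodule ℂ H) (hA : A' ≤ A) (hB : B' ≤ B) :
    Module.finrank ℂ ↥((A ⊓ B) ⊔ B') - Module.finrank ℂ ↥((A' ⊓ B) ⊔ B') =
    Module.finrank ℂ ↥((B ⊓ A) ⊔ A') - Module.finrank ℂ ↥((B' ⊓ A) ⊔ A') := by
  have hs := zassen_sum A A' B B' hA hB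
  have m1 : Module.finrank ℂ ↥((A' ⊓ B) ⊔ B') ≤ Module.finrank ℂ ↥((A ⊓ B) ⊔ B') :=
    Submodule.finrank_mono (sup_le_sup_right (inf_le_inf_right _ hA) _)
  have m2 : Module.finrank ℂ ↥((B' ⊓ A) ⊔ A') ≤ Module.finrank ℂ ↥((B ⊓ A) ⊔ A') :=
    Submodule.finrank_mono (sup_le_sup_right (inf_le_inf_right _ hB) _)
  omega

end Zassenhaus

/-- the inductive step in the proof that equality of Hodge and
weight graded dimensions forces a mixed Hodge structure to be Hodge–Tate. -/
theorem stmt14 {H : Type*} [AddCommGroup H] [Module ℂ H] [FiniteDimensional ℂ H]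
    (ν : ℕ) (ℓ : ℤ) (F W : ℤ → Submodule ℂ H)
    (hF : Antitone F) (hW : Monotone W)
    (hFtop : ∀ p : ℤ, p ≤ 0 → F p = ⊤) (hFbot : ∀ p : ℤ, (ν : ℤ) < p → F p = ⊥)
    (hWbot : ∃ a : ℤ, ∀ m ≤ a, W m = ⊥) (hWtop : ∃ b : ℤ, ∀ m, b ≤ m → W m = ⊤)
    -- `W` has only even jumps:
    (heven : ∀ k : ℤ, W (2 * k + 1) = W (2 * k))
    -- for all `j ≤ ℓ`, `gr_F^p gr^W_{2j} H = 0` whenever `p ≠ j`: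
    (hHT : ∀ j : ℤ, j ≤ ℓ → ∀ p : ℤ, p ≠ j → grFgrW F W p (2 * j) = 0)
    -- for all `j ≤ ℓ`, `dim gr_F^j H = dim gr^W_{2j} H`:
    (hdim : ∀ j : ℤ, j ≤ ℓ →
      Module.finrank ℂ ↥(F j) - Module.finrank ℂ ↥(F (j + 1)) =
        Module.finrank ℂ ↥(W (2 * j)) - Module.finrank ℂ ↥(W (2 * j - 1))) :
    -- then `gr^W_{2i} gr_F^j H = 0` for `j ≤ ℓ`, `i ≠ j`; in particular
    -- `gr_F^p gr^W_{2(ℓ+1)} H = 0` for all `p ≤ ℓ`.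
    (∀ j : ℤ, j ≤ ℓ → ∀ i : ℤ, i ≠ j → grWgrF F W j (2 * i) = 0) ∧
      (∀ p : ℤ, p ≤ ℓ → grFgrW F W p (2 * (ℓ + 1)) = 0) := by
  -- Zassenhaus: the two double-graded dimensions coincide
  have hzas : ∀ p m : ℤ, grFgrW F W p m = grWgrF F W p m := by
    intro p m
    exact zassen (F p) (F (p + 1)) (W m) (W (m - 1)) (hF (by omega)) (hW (by omega))
  -- the key step: for j ≤ ℓ the `e`-function saturates at 2j-1 and 2j
  have key : ∀ j : ℤ, j ≤ ℓ →
      Module.finrank ℂ ↥((W (2 * j) ⊓ F j) ⊔ F (j + 1)) = Module.finrank ℂ ↥(F j) ∧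
      Module.finrank ℂ ↥((W (2 * j - 1) ⊓ F j) ⊔ F (j + 1)) =
        Module.finrank ℂ ↥(F (j + 1)) := by
    intro j hj
    -- d1 p = dim ((F p ⊓ W 2j) ⊔ W (2j-1))
    have d1anti : ∀ p q : ℤ, p ≤ q →
        Module.finrank ℂ ↥((F q ⊓ W (2 * j)) ⊔ W (2 * j - 1)) ≤
        Module.finrank ℂ ↥((F p ⊓ W (2 * j)) ⊔ W (2 * j - 1)) := fun p q h =>
      Submodule.finrank_mono (sup_le_sup_right (inf_le_inf_right _ (hF h)) _)
    have dstep : ∀ p : ℤ, p ≠ j →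
        Module.finrank ℂ ↥((F p ⊓ W (2 * j)) ⊔ W (2 * j - 1)) =
        Module.finrank ℂ ↥((F (p + 1) ⊓ W (2 * j)) ⊔ W (2 * j - 1)) := by
      intro p hp
      have h0 := hHT j hj p hp
      have h1 := d1anti p (p + 1) (by omega)
      simp only [grFgrW] at h0
      omega
    have claim2 : Module.finrank ℂ ↥((F (j + 1) ⊓ W (2 * j)) ⊔ W (2 * j - 1)) =
        Module.finrank ℂ ↥(W (2 * j - 1)) := by
      have step : ∀ n : ℕ, Module.finrank ℂ ↥((F (j + 1) ⊓ W (2 * j)) ⊔ W (2 * j - 1)) =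
          Module.finrank ℂ ↥((F (j + 1 + n) ⊓ W (2 * j)) ⊔ W (2 * j - 1)) := by
        intro n
        induction n with
        | zero => rw [show j + 1 + ((0 : ℕ) : ℤ) = j + 1 by norm_num]
        | succ n ih =>
          rw [ih, dstep (j + 1 + n) (by omega),
            show (j + 1 + (n : ℤ)) + 1 = j + 1 + ((n + 1 : ℕ) : ℤ) by push_cast; ring]
      have hn := step (ν - j).toNat
      have hb : F (j + 1 + ((ν - j).toNat : ℤ)) = ⊥ := hFbot _ (by omega)
      rw [hn, hb, bot_inf_eq, bot_sup_eq]
    have claim1 : Module.finrank ℂ ↥((F j ⊓ W (2 * j)) ⊔ W (2 * j - 1)) =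
        Module.finrank ℂ ↥(W (2 * j)) := by
      have step : ∀ n : ℕ, Module.finrank ℂ ↥((F j ⊓ W (2 * j)) ⊔ W (2 * j - 1)) =
          Module.finrank ℂ ↥((F (j - n) ⊓ W (2 * j)) ⊔ W (2 * j - 1)) := by
        intro n
        induction n with
        | zero => rw [show j - ((0 : ℕ) : ℤ) = j by norm_num]
        | succ n ih =>
          rw [ih, show (j - (n : ℤ)) = (j - ((n : ℕ) + 1 : ℕ)) + 1 by push_cast; ring]
          exact (dstep (j - ((n : ℕ) + 1 : ℕ)) (by push_cast; omega)).symm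
      have hn := step j.toNat
      have ht : F (j - (j.toNat : ℤ)) = ⊤ := hFtop _ (by omega)
      rw [hn, ht]
      have hle : W (2 * j - 1) ≤ W (2 * j) := hW (by omega)
      rw [top_inf_eq, sup_eq_left.mpr hle]
    -- grFgrW j (2j) = dim W(2j) - dim W(2j-1)
    have hgr : grFgrW F W j (2 * j) =
        Module.finrank ℂ ↥(W (2 * j)) - Module.finrank ℂ ↥(W (2 * j - 1)) := by
      simp only [grFgrW, claim1, claim2]
    have hz := hzas j (2 * j)
    have hd := hdim j hj
    -- bounds on e
    have b1 : Module.finrank ℂ ↥(F (j + 1)) ≤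
        Module.finrank ℂ ↥((W (2 * j - 1) ⊓ F j) ⊔ F (j + 1)) :=
      Submodule.finrank_mono le_sup_right
    have b2 : Module.finrank ℂ ↥((W (2 * j - 1) ⊓ F j) ⊔ F (j + 1)) ≤
        Module.finrank ℂ ↥((W (2 * j) ⊓ F j) ⊔ F (j + 1)) :=
      Submodule.finrank_mono (sup_le_sup_right (inf_le_inf_right _ (hW (by omega))) _)
    have b3 : Module.finrank ℂ ↥((W (2 * j) ⊓ F j) ⊔ F (j + 1)) ≤
        Module.finrank ℂ ↥(F j) :=
      Submodule.finrank_mono (sup_le inf_le_right (hF (by omega)))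
    have b4 : Module.finrank ℂ ↥(F (j + 1)) ≤ Module.finrank ℂ ↥(F j) :=
      Submodule.finrank_mono (hF (by omega))
    have b5 : Module.finrank ℂ ↥(W (2 * j - 1)) ≤ Module.finrank ℂ ↥(W (2 * j)) :=
      Submodule.finrank_mono (hW (by omega))
    simp only [grWgrF] at hz
    rw [hgr] at hz
    constructor <;> omega
  -- monotonicity and bounds for the `e`-function of a fixed j
  have emono : ∀ j m m' : ℤ, m ≤ m' →
      Module.finrank ℂ ↥((W m ⊓ F j) ⊔ F (j + 1)) ≤
      Module.finrank ℂ ↥((W m' ⊓ F j) ⊔ F (j + 1)) := fun j m m' h =>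
    Submodule.finrank_mono (sup_le_sup_right (inf_le_inf_right _ (hW h)) _)
  have elow : ∀ j m : ℤ, Module.finrank ℂ ↥(F (j + 1)) ≤
      Module.finrank ℂ ↥((W m ⊓ F j) ⊔ F (j + 1)) := fun j m =>
    Submodule.finrank_mono le_sup_right
  have ehigh : ∀ j m : ℤ, Module.finrank ℂ ↥((W m ⊓ F j) ⊔ F (j + 1)) ≤
      Module.finrank ℂ ↥(F j) := fun j m =>
    Submodule.finrank_mono (sup_le inf_le_right (hF (by omega)))
  have part1 : ∀ j : ℤ, j ≤ ℓ → ∀ i : ℤ, i ≠ j → grWgrF F W j (2 * i) = 0 := by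
    intro j hj i hi
    obtain ⟨k1, k2⟩ := key j hj
    simp only [grWgrF]
    rcases lt_or_gt_of_ne hi with h | h
    · -- i < j : everything pinned to dim F (j+1)
      have t1 := emono j (2 * i) (2 * j - 1) (by omega)
      have t2 := emono j (2 * i - 1) (2 * i) (by omega)
      have t3 := elow j (2 * i - 1)
      omega
    · -- i > j : everything pinned to dim F j
      have t1 := emono j (2 * j) (2 * i - 1) (by omega)
      have t2 := emono j (2 * i - 1) (2 * i) (by omega)
      have t3 := ehigh j (2 * i)
      omega
  refine ⟨part1, ?_⟩
  intro p hp
  rw [hzas]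
  exact part1 p hp (ℓ + 1) (by omega)
end
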